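/- The angular-momentum-related function K_J3 = (x·py − y·px)² + 2k2(y/x)² + 2k3(x/y)² Poisson-commutes with H_μ = (1/(1−λr²))·[ (px²+py²+pz²)/2 + k1 r² + k2/x² + k3/y² + k4/z² ], where r² = x²+y²+z². -/

import Mathlib

noncomputable section

/-- Phase space ℝ⁶ with coordinates (x,y,z,px,py,pz). -/
abbrev Pt := Fin 6 → ℝ

/-- Standard basis vector. -/
def e (j : Fin 6) : Pt := Pi.single j 1

/-- Canonical Poisson bracket on ℝ⁶:
{F,G} = Σᵢ (∂F/∂qᵢ ∂G/∂pᵢ − ∂F/∂pᵢ ∂G/∂qᵢ). -/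
def pb (F G : Pt → ℝ) (q : Pt) : ℝ :=
    (fderiv ℝ F q (e 0)) * (fderiv ℝ G q (e 3)) - (fderiv ℝ F q (e 3)) * (fderiv ℝ G q (e 0))
  + (fderiv ℝ F q (e 1)) * (fderiv ℝ G q (e 4)) - (fderiv ℝ F q (e 4)) * (fderiv ℝ G q (e 1))
  + (fderiv ℝ F q (e 2)) * (fderiv ℝ G q (e 5)) - (fderiv ℝ F q (e 5)) * (fderiv ℝ G q (e 2))

/-- H_μ = (1/(1−λr²))·[(px²+py²+pz²)/2 + k1 r² + k2/x² + k3/y² + k4/z²]. -/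
def Hmu (lam k1 k2 k3 k4 : ℝ) (q : Pt) : ℝ :=
  (1 / (1 - lam * (q 0 ^ 2 + q 1 ^ 2 + q 2 ^ 2))) *
    ((q 3 ^ 2 + q 4 ^ 2 + q 5 ^ 2) / 2 + k1 * (q 0 ^ 2 + q 1 ^ 2 + q 2 ^ 2)
      + k2 / q 0 ^ 2 + k3 / q 1 ^ 2 + k4 / q 2 ^ 2)

/-- K_J3 = (x py − y px)² + 2k2 (y/x)² + 2k3 (x/y)². -/
def KJ3 (k2 k3 : ℝ) (q : Pt) : ℝ :=
  (q 0 * q 4 - q 1 * q 3) ^ 2 + 2 * k2 * (q 1 / q 0) ^ 2 + 2 * k3 * (q 0 / q 1) ^ 2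

/-!
Write `H_μ = D⁻¹ · H₀` with `D = 1 - λ r²` and `H₀` the flat Hamiltonian. Since `{K, ·}` is a
derivation, `{K, H_μ} = D⁻¹ {K, H₀} - H₀ D⁻² {K, D}`, and both brackets vanish. `K` depends on the
momenta only through `L₃ = x p_y - y p_x`, which generates rotations about the `z`-axis and so
commutes with `r²`, `p²` and `z`; what is left of `{K, H₀}`, namely
`{L₃², k₂/x² + k₃/y²} + {2k₂(y/x)² + 2k₃(x/y)², p²/2}`, cancels term by term.
-/

open ContinuousLinearMap

theorem HasFDerivAt.div {E : Type*} [NormedAddCommGroup E] [NormedSpace ℝ E] {c d : E → ℝ}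
    {c' d' : E →L[ℝ] ℝ} {x : E} (hc : HasFDerivAt c c' x) (hd : HasFDerivAt d d' x)
    (hx : d x ≠ 0) :
    HasFDerivAt (fun y => c y / d y) ((d x)⁻¹ • c' - (c x / d x ^ 2) • d') x :=
  (hc.mul ((hasDerivAt_inv hx).comp_hasFDerivAt x hd)).congr_fderiv <| by
    ext v
    simp only [Function.comp_apply, add_apply, sub_apply, smul_apply, smul_eq_mul]
    ring

section PoissonBracket

variable {F G : Pt → ℝ} {q : Pt}

theorem pb_mul_right {G₁ G₂ : Pt → ℝ} (h₁ : DifferentiableAt ℝ G₁ q)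
    (h₂ : DifferentiableAt ℝ G₂ q) :
    pb F (G₁ * G₂) q = G₁ q * pb F G₂ q + G₂ q * pb F G₁ q := by
  simp only [pb, fderiv_mul h₁ h₂, add_apply, smul_apply, smul_eq_mul]
  ring

theorem pb_comp_right {g : ℝ → ℝ} {g' : ℝ} (hg : HasDerivAt g g' (G q))
    (hG : DifferentiableAt ℝ G q) : pb F (g ∘ G) q = g' * pb F G q := by
  simp only [pb, (hg.comp_hasFDerivAt q hG.hasFDerivAt).fderiv, smul_apply, smul_eq_mul]
  ring

end PoissonBracket

def conformalFactor (lam : ℝ) (q : Pt) : ℝ := 1 - lam * (q 0 ^ 2 + q 1 ^ 2 + q 2 ^ 2)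

def flatHam (k1 k2 k3 k4 : ℝ) (q : Pt) : ℝ :=
  (q 3 ^ 2 + q 4 ^ 2 + q 5 ^ 2) / 2 + k1 * (q 0 ^ 2 + q 1 ^ 2 + q 2 ^ 2)
    + k2 / q 0 ^ 2 + k3 / q 1 ^ 2 + k4 / q 2 ^ 2

theorem Hmu_eq_inv_comp_mul (lam k1 k2 k3 k4 : ℝ) :
    Hmu lam k1 k2 k3 k4 = (fun t => t⁻¹) ∘ conformalFactor lam * flatHam k1 k2 k3 k4 := by
  funext q
  simp only [Hmu, conformalFactor, flatHam, one_div, Function.comp_apply, Pi.mul_apply]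

section Gradients

variable {q : Pt}

theorem differentiableAt_conformalFactor (lam : ℝ) :
    DifferentiableAt ℝ (conformalFactor lam) q := by
  unfold conformalFactor
  fun_prop

theorem differentiableAt_flatHam (k1 k2 k3 k4 : ℝ) (hx : q 0 ≠ 0) (hy : q 1 ≠ 0)
    (hz : q 2 ≠ 0) : DifferentiableAt ℝ (flatHam k1 k2 k3 k4) q := by
  unfold flatHam
  fun_prop (disch := positivity)

theorem fderiv_conformalFactor_apply (lam : ℝ) (i : Fin 6) :
    fderiv ℝ (conformalFactor lam) q (e i) =
      ![-2 * lam * q 0, -2 * lam * q 1, -2 * lam * q 2, 0, 0, 0] i := by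
  have p (j : Fin 6) := hasFDerivAt_apply (𝕜 := ℝ) j q
  have hD : HasFDerivAt (conformalFactor lam) _ q :=
    (hasFDerivAt_const 1 q).sub
      ((((p 0).pow 2).add ((p 1).pow 2)).add ((p 2).pow 2) |>.const_mul lam)
  rw [hD.fderiv]
  fin_cases i <;>
    simp only [e, add_apply, sub_apply, smul_apply, proj_apply, zero_apply, smul_eq_mul,
      nsmul_eq_mul, Pi.single_apply, Fin.isValue, Fin.zero_eta, Fin.mk_one, Fin.reduceFinMk,
      Fin.reduceEq, if_true, if_false, Matrix.cons_val, Nat.add_one_sub_one, pow_one,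
      Nat.cast_ofNat] <;>
    ring

theorem fderiv_flatHam_apply (k1 k2 k3 k4 : ℝ) (hx : q 0 ≠ 0) (hy : q 1 ≠ 0) (hz : q 2 ≠ 0)
    (i : Fin 6) :
    fderiv ℝ (flatHam k1 k2 k3 k4) q (e i) =
      ![2 * k1 * q 0 - 2 * k2 / q 0 ^ 3, 2 * k1 * q 1 - 2 * k3 / q 1 ^ 3,
        2 * k1 * q 2 - 2 * k4 / q 2 ^ 3, q 3, q 4, q 5] i := by
  have p (j : Fin 6) := hasFDerivAt_apply (𝕜 := ℝ) j q
  have c (a : ℝ) := hasFDerivAt_const (𝕜 := ℝ) a q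
  have hS : HasFDerivAt (flatHam k1 k2 k3 k4) _ q :=
    (((((p 3).pow 2).add ((p 4).pow 2)).add ((p 5).pow 2)).div (c 2) two_ne_zero).add
      ((((p 0).pow 2).add ((p 1).pow 2)).add ((p 2).pow 2) |>.const_mul k1)
    |>.add ((c k2).div ((p 0).pow 2) (pow_ne_zero 2 hx))
    |>.add ((c k3).div ((p 1).pow 2) (pow_ne_zero 2 hy))
    |>.add ((c k4).div ((p 2).pow 2) (pow_ne_zero 2 hz))
  rw [hS.fderiv]
  fin_cases i <;>
    simp only [e, add_apply, sub_apply, smul_apply, proj_apply, zero_apply, smul_eq_mul,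
      nsmul_eq_mul, Pi.single_apply, Fin.isValue, Fin.zero_eta, Fin.mk_one, Fin.reduceFinMk,
      Fin.reduceEq, if_true, if_false, Matrix.cons_val, Nat.add_one_sub_one, pow_one,
      Nat.cast_ofNat] <;>
    field_simp <;> ring

theorem fderiv_KJ3_apply (k2 k3 : ℝ) (hx : q 0 ≠ 0) (hy : q 1 ≠ 0) (i : Fin 6) :
    fderiv ℝ (KJ3 k2 k3) q (e i) =
      ![2 * (q 0 * q 4 - q 1 * q 3) * q 4 - 4 * k2 * q 1 ^ 2 / q 0 ^ 3 + 4 * k3 * q 0 / q 1 ^ 2,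
        -2 * (q 0 * q 4 - q 1 * q 3) * q 3 + 4 * k2 * q 1 / q 0 ^ 2 - 4 * k3 * q 0 ^ 2 / q 1 ^ 3,
        0, -2 * (q 0 * q 4 - q 1 * q 3) * q 1, 2 * (q 0 * q 4 - q 1 * q 3) * q 0, 0] i := by
  have p (j : Fin 6) := hasFDerivAt_apply (𝕜 := ℝ) j q
  have hK : HasFDerivAt (KJ3 k2 k3) _ q :=
    ((((p 0).mul (p 4)).sub ((p 1).mul (p 3))).pow 2).add
      ((((p 1).div (p 0) hx).pow 2).const_mul (2 * k2)) |>.add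
      ((((p 0).div (p 1) hy).pow 2).const_mul (2 * k3))
  rw [hK.fderiv]
  fin_cases i <;>
    simp only [e, add_apply, sub_apply, smul_apply, proj_apply, smul_eq_mul, nsmul_eq_mul,
      Pi.sub_apply, Pi.mul_apply, Pi.single_apply, Fin.isValue, Fin.zero_eta, Fin.mk_one,
      Fin.reduceFinMk, Fin.reduceEq, if_true, if_false, Matrix.cons_val, Nat.add_one_sub_one,
      pow_one, Nat.cast_ofNat] <;>
    field_simp <;> ring

theorem pb_KJ3_conformalFactor (k2 k3 lam : ℝ) (hx : q 0 ≠ 0) (hy : q 1 ≠ 0) :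
    pb (KJ3 k2 k3) (conformalFactor lam) q = 0 := by
  simp only [pb, fderiv_KJ3_apply k2 k3 hx hy, fderiv_conformalFactor_apply,
    Matrix.cons_val_zero, Matrix.cons_val_one, Matrix.cons_val, Fin.isValue]
  ring

theorem pb_KJ3_flatHam (k1 k2 k3 k4 : ℝ) (hx : q 0 ≠ 0) (hy : q 1 ≠ 0) (hz : q 2 ≠ 0) :
    pb (KJ3 k2 k3) (flatHam k1 k2 k3 k4) q = 0 := by
  simp only [pb, fderiv_KJ3_apply k2 k3 hx hy, fderiv_flatHam_apply k1 k2 k3 k4 hx hy hz,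
    Matrix.cons_val_zero, Matrix.cons_val_one, Matrix.cons_val, Fin.isValue]
  field_simp
  ring

end Gradients

theorem stmt5 (lam k1 k2 k3 k4 : ℝ) :
    ∀ q : Pt, q 0 ≠ 0 → q 1 ≠ 0 → q 2 ≠ 0 →
      1 - lam * (q 0 ^ 2 + q 1 ^ 2 + q 2 ^ 2) > 0 →
      pb (KJ3 k2 k3) (Hmu lam k1 k2 k3 k4) q = 0 := by
  intro q hx hy hz hD
  have hD_diff : DifferentiableAt ℝ (conformalFactor lam) q :=
    differentiableAt_conformalFactor lam
  rw [Hmu_eq_inv_comp_mul,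
    pb_mul_right ((differentiableAt_inv hD.ne').comp q hD_diff)
      (differentiableAt_flatHam k1 k2 k3 k4 hx hy hz),
    pb_comp_right (hasDerivAt_inv hD.ne') hD_diff, pb_KJ3_flatHam k1 k2 k3 k4 hx hy hz,
    pb_KJ3_conformalFactor k2 k3 lam hx hy]
  ring
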